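/- The map ∇u₀ restricted to the unit sphere S² ⊂ ℝ³ is Lipschitz: there exists C > 0 with |∇u₀(x) − ∇u₀(y)| ≤ C|x−y| for all x, y ∈ S². Moreover, for every δ ∈ (0,1) there exists c > 0 such that |∇u₀(x) − ∇u₀(x₀)| ≥ c|x−x₀| whenever x ∈ S² and x₀ ∈ S² satisfies x₀₁² ≤ (1−δ)(x₀₂² + x₀₃²). -/

import Mathlib

/-!
On the unit sphere `√2 ∇u₀ = sphereGrad`, where
`sphereGrad x = (2a³ - 3a, (1 + 2a²) x₁, (1 + 2a²) x₂)` with `a = x₀`. On the great circle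
`x₂ = 0`, in the coordinate `z = x₀ + i x₁`, it becomes `planeGrad z = (z³ - 3 z̄) / 2`, and for
unit `z, w` the difference factors as `planeGrad z - planeGrad w = (z - w) · diffQuot z w / 2`.
Trivially `|diffQuot z w| ≤ 6`. From below, `diffQuot w w = 6 Re w²` measures how far `w` is
from the cone `x₀² = x₁²`, `diffQuot · w` is `6`-Lipschitz, and `|diffQuot z w| ≥ |z - w|² / 2`;
together `|diffQuot z w| ≥ (Re w²)² / 8`.

For `x, y` on the sphere, `|x - y|²` and `|sphereGrad x - sphereGrad y|²` are affine in the
inner product `s` of `(x₁, x₂)` and `(y₁, y₂)`. When `|s|` equals the product of their lengths,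
the pair can be rotated about the `x₀`-axis into the great circle, so both squares are the same
convex combination of their values at two pairs of points of the unit circle.
-/

open Real Set Metric
open scoped RealInnerProductSpace

noncomputable section

/-- `u₀(x) = (x₂² + x₃² − x₁²)/(√2·|x|)` (with value `0` at the origin, by `0`-division). -/
def u0 : EuclideanSpace ℝ (Fin 3) → ℝ :=
  fun x => ((x 1) ^ 2 + (x 2) ^ 2 - (x 0) ^ 2) / (Real.sqrt 2 * ‖x‖)

open ComplexConjugate

def planeGrad (z : ℂ) : ℂ := (z ^ 3 - 3 * conj z) / 2

def diffQuot (z w : ℂ) : ℂ := z ^ 2 + z * w + w ^ 2 + 3 * conj (z * w)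

lemma Complex.sq_norm_eq_re_sq_add_im_sq (z : ℂ) : ‖z‖ ^ 2 = z.re ^ 2 + z.im ^ 2 := by
  rw [Complex.norm_eq_sqrt_sq_add_sq, Real.sq_sqrt (by positivity)]

lemma Complex.mul_conj_of_norm_eq_one {z : ℂ} (hz : ‖z‖ = 1) : z * conj z = 1 := by
  simp [Complex.mul_conj', hz]

lemma Complex.re_sq_add_im_sq_of_norm_eq_one {z : ℂ} (hz : ‖z‖ = 1) : z.re ^ 2 + z.im ^ 2 = 1 := by
  rw [← Complex.sq_norm_eq_re_sq_add_im_sq, hz, one_pow]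

lemma diffQuot_self (w : ℂ) : diffQuot w w = 6 * (w ^ 2).re := by
  have h := Complex.add_conj (w ^ 2)
  push_cast at h
  rw [diffQuot, ← sq]
  linear_combination 3 * h

lemma norm_diffQuot_self (w : ℂ) : ‖diffQuot w w‖ = 6 * |(w ^ 2).re| := by
  rw [diffQuot_self, norm_mul, Complex.norm_real, Real.norm_eq_abs]
  norm_num

section UnitCircle

variable {z w : ℂ}

lemma re_planeGrad (hz : ‖z‖ = 1) : (planeGrad z).re = 2 * z.re ^ 3 - 3 * z.re := by
  simp only [planeGrad, pow_succ, pow_zero, one_mul, Complex.div_ofNat_re, Complex.sub_re,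
    Complex.mul_re, Complex.mul_im, Complex.re_ofNat, Complex.conj_re, Complex.im_ofNat,
    Complex.conj_im, mul_neg, zero_mul, neg_zero, sub_zero]
  linear_combination (-3 * z.re / 2) * Complex.re_sq_add_im_sq_of_norm_eq_one hz

lemma im_planeGrad (hz : ‖z‖ = 1) : (planeGrad z).im = (1 + 2 * z.re ^ 2) * z.im := by
  simp only [planeGrad, pow_succ, pow_zero, one_mul, Complex.div_ofNat_im, Complex.sub_im,
    Complex.mul_im, Complex.mul_re, Complex.re_ofNat, Complex.conj_im, mul_neg, Complex.im_ofNat,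
    Complex.conj_re, zero_mul, add_zero, sub_neg_eq_add]
  linear_combination (-z.im / 2) * Complex.re_sq_add_im_sq_of_norm_eq_one hz

lemma planeGrad_sub_planeGrad (hz : ‖z‖ = 1) (hw : ‖w‖ = 1) :
    planeGrad z - planeGrad w = (z - w) * diffQuot z w / 2 := by
  rw [planeGrad, planeGrad, diffQuot, map_mul]
  linear_combination (-3 / 2 * conj w) * Complex.mul_conj_of_norm_eq_one hz +
    (3 / 2 * conj z) * Complex.mul_conj_of_norm_eq_one hw

lemma norm_diffQuot_le (hz : ‖z‖ = 1) (hw : ‖w‖ = 1) : ‖diffQuot z w‖ ≤ 6 := by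
  calc ‖diffQuot z w‖ ≤ ‖z ^ 2‖ + ‖z * w‖ + ‖w ^ 2‖ + ‖3 * conj (z * w)‖ := norm_add₄_le ..
    _ = 6 := by norm_num [hz, hw]

lemma diffQuot_eq (hz : ‖z‖ = 1) (hw : ‖w‖ = 1) :
    diffQuot z w = z * w * ((3 - ‖z - w‖ ^ 2 : ℝ) : ℂ) + 3 * conj (z * w) := by
  push_cast
  rw [← Complex.mul_conj', diffQuot, map_sub]
  linear_combination (z * w - z ^ 2) * Complex.mul_conj_of_norm_eq_one hw +
    (z * w - w ^ 2) * Complex.mul_conj_of_norm_eq_one hz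

lemma sq_norm_sub_div_two_le_norm_diffQuot (hz : ‖z‖ = 1) (hw : ‖w‖ = 1) :
    ‖z - w‖ ^ 2 / 2 ≤ ‖diffQuot z w‖ := by
  have ht : ‖z - w‖ ≤ 2 := by linarith [norm_sub_le z w]
  have h : 3 ≤ ‖diffQuot z w‖ + |3 - ‖z - w‖ ^ 2| := by
    calc (3 : ℝ) = ‖diffQuot z w - z * w * ((3 - ‖z - w‖ ^ 2 : ℝ) : ℂ)‖ := by
          rw [diffQuot_eq hz hw, add_sub_cancel_left]
          norm_num [hz, hw]
      _ ≤ ‖diffQuot z w‖ + ‖z * w * ((3 - ‖z - w‖ ^ 2 : ℝ) : ℂ)‖ := norm_sub_le _ _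
      _ = ‖diffQuot z w‖ + |3 - ‖z - w‖ ^ 2| := by
          rw [norm_mul, norm_mul, hz, hw, Complex.norm_real, Real.norm_eq_abs, one_mul, one_mul]
  rcases abs_cases (3 - ‖z - w‖ ^ 2) with ⟨habs, _⟩ | ⟨habs, _⟩ <;> rw [habs] at h
  · nlinarith [sq_nonneg ‖z - w‖]
  · nlinarith [norm_nonneg (z - w)]

lemma norm_diffQuot_sub_diffQuot_self_le (hz : ‖z‖ = 1) (hw : ‖w‖ = 1) :
    ‖diffQuot z w - diffQuot w w‖ ≤ 6 * ‖z - w‖ := by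
  have h : diffQuot z w - diffQuot w w =
      (z - w) * (z + 2 * w) + 3 * conj w * conj (z - w) := by
    simp only [diffQuot, map_mul, map_sub]
    ring
  have h3 : ‖z + 2 * w‖ ≤ 3 := by
    calc ‖z + 2 * w‖ ≤ ‖z‖ + ‖2 * w‖ := norm_add_le _ _
      _ = 3 := by norm_num [hz, hw]
  calc ‖diffQuot z w - diffQuot w w‖ ≤ ‖z - w‖ * ‖z + 2 * w‖ + 3 * ‖z - w‖ := by
        rw [h]
        refine (norm_add_le _ _).trans_eq ?_
        simp only [norm_mul, Complex.norm_conj, hw]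
        norm_num
    _ ≤ ‖z - w‖ * 3 + 3 * ‖z - w‖ := by gcongr
    _ = 6 * ‖z - w‖ := by ring

lemma re_sq_sq_div_eight_le_norm_diffQuot (hz : ‖z‖ = 1) (hw : ‖w‖ = 1) :
    (w ^ 2).re ^ 2 / 8 ≤ ‖diffQuot z w‖ := by
  set m := |(w ^ 2).re|
  have hm1 : m ≤ 1 := (Complex.abs_re_le_norm _).trans (by simp [hw])
  have hm0 : 0 ≤ m := abs_nonneg _
  rw [← sq_abs]
  rcases le_or_gt ‖z - w‖ (m / 2) with hnear | hfar
  · have h := norm_le_norm_add_norm_sub (diffQuot z w) (diffQuot w w)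
    rw [norm_diffQuot_self] at h
    nlinarith [norm_diffQuot_sub_diffQuot_self_le hz hw]
  · have : (m / 2) ^ 2 ≤ ‖z - w‖ ^ 2 := pow_le_pow_left₀ (by positivity) hfar.le 2
    linarith [sq_norm_sub_div_two_le_norm_diffQuot hz hw]

lemma norm_planeGrad_sub_le (hz : ‖z‖ = 1) (hw : ‖w‖ = 1) :
    ‖planeGrad z - planeGrad w‖ ≤ 3 * ‖z - w‖ := by
  rw [planeGrad_sub_planeGrad hz hw, norm_div, norm_mul, Complex.norm_two]
  nlinarith [norm_diffQuot_le hz hw, norm_nonneg (z - w)]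

lemma le_norm_planeGrad_sub (hz : ‖z‖ = 1) (hw : ‖w‖ = 1) :
    (w ^ 2).re ^ 2 / 16 * ‖z - w‖ ≤ ‖planeGrad z - planeGrad w‖ := by
  rw [planeGrad_sub_planeGrad hz hw, norm_div, norm_mul, Complex.norm_two]
  nlinarith [re_sq_sq_div_eight_le_norm_diffQuot hz hw, norm_nonneg (z - w)]

end UnitCircle

lemma hasFDerivAt_norm_inv_of_norm_eq_one {F : Type*} [NormedAddCommGroup F]
    [InnerProductSpace ℝ F] {x : F} (hx : ‖x‖ = 1) :
    HasFDerivAt (fun y : F => ‖y‖⁻¹) (-innerSL ℝ x) x := by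
  have h := (hasDerivAt_inv (by simp [hx])).comp_hasFDerivAt x
    ((hasStrictFDerivAt_norm_sq x).hasFDerivAt.sqrt (by simp [hx]))
  simp only [Function.comp_def, Real.sqrt_sq (norm_nonneg _), hx] at h
  refine h.congr_fderiv ?_
  ext v
  simp

lemma exists_mem_Icc_eq_sub_of_abs_le {s P : ℝ} (h : |s| ≤ P) :
    ∃ θ ∈ Icc (0 : ℝ) 1, s = θ * P - (1 - θ) * P := by
  obtain ⟨α, θ, hα, hθ, hαθ, hs⟩ : s ∈ segment ℝ (-P) P := by
    rw [segment_eq_Icc (by linarith [abs_nonneg s])]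
    exact abs_le.mp h
  obtain rfl : α = 1 - θ := by linarith
  refine ⟨θ, ⟨hθ, by linarith⟩, ?_⟩
  rw [← hs, smul_eq_mul, smul_eq_mul]
  ring

section Sphere

local notation "ℝ³" => EuclideanSpace ℝ (Fin 3)

def sphereGrad (x : ℝ³) : ℝ³ :=
  !₂[2 * x 0 ^ 3 - 3 * x 0, (1 + 2 * x 0 ^ 2) * x 1, (1 + 2 * x 0 ^ 2) * x 2]

lemma norm_sq_eq_sum_fin_three (x : ℝ³) : ‖x‖ ^ 2 = x 0 ^ 2 + x 1 ^ 2 + x 2 ^ 2 := by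
  simp [EuclideanSpace.norm_sq_eq, Fin.sum_univ_three]

variable {x y : ℝ³}

lemma sum_sq_eq_one_of_norm_eq_one (hx : ‖x‖ = 1) : x 0 ^ 2 + x 1 ^ 2 + x 2 ^ 2 = 1 := by
  rw [← norm_sq_eq_sum_fin_three, hx, one_pow]

lemma hasGradientAt_u0 (hx : ‖x‖ = 1) : HasGradientAt u0 ((√2)⁻¹ • sphereGrad x) x := by
  have hproj (i : Fin 3) := (EuclideanSpace.proj i : ℝ³ →L[ℝ] ℝ).hasFDerivAt (x := x)
  have hnum := (((hproj 1).pow 2).add ((hproj 2).pow 2)).sub ((hproj 0).pow 2)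
  have h := (hnum.mul (hasFDerivAt_norm_inv_of_norm_eq_one hx)).const_mul (√2)⁻¹
  have hu0 : u0 = fun y => (√2)⁻¹ * ((y 1 ^ 2 + y 2 ^ 2 - y 0 ^ 2) * ‖y‖⁻¹) := by
    ext y
    simp only [u0]
    ring
  rw [hasGradientAt_iff_hasFDerivAt, hu0]
  refine h.congr_fderiv ?_
  ext v
  simp only [PiLp.proj_apply, Pi.sub_apply, Pi.add_apply, smul_neg, hx, inv_one,
    Nat.add_one_sub_one, pow_one, nsmul_eq_mul, Nat.cast_ofNat, one_smul, smul_add,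
    add_apply, neg_apply, smul_apply, sub_apply, coe_innerSL_apply, PiLp.inner_apply,
    RCLike.inner_apply, conj_trivial, Fin.sum_univ_three, smul_eq_mul, sphereGrad, map_smul,
    InnerProductSpace.toDual_apply_apply, Matrix.cons_val_zero, Matrix.cons_val_one,
    Matrix.cons_val]
  linear_combination
    (-(√2)⁻¹ * (v 0 * x 0 + v 1 * x 1 + v 2 * x 2)) * sum_sq_eq_one_of_norm_eq_one hx

lemma norm_gradient_u0_sub (hx : ‖x‖ = 1) (hy : ‖y‖ = 1) :
    ‖gradient u0 x - gradient u0 y‖ = (√2)⁻¹ * ‖sphereGrad x - sphereGrad y‖ := by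
  rw [(hasGradientAt_u0 hx).gradient, (hasGradientAt_u0 hy).gradient, ← smul_sub, norm_smul,
    norm_inv, Real.norm_of_nonneg (Real.sqrt_nonneg 2)]

lemma exists_planar_pair (hx : ‖x‖ = 1) (hy : ‖y‖ = 1) :
    ∃ z w : ℂ, ∃ θ ∈ Icc (0 : ℝ) 1, ‖z‖ = 1 ∧ ‖w‖ = 1 ∧
      (w ^ 2).re = y 0 ^ 2 - (y 1 ^ 2 + y 2 ^ 2) ∧
      ‖x - y‖ ^ 2 = θ * ‖z - w‖ ^ 2 + (1 - θ) * ‖z - conj w‖ ^ 2 ∧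
      ‖sphereGrad x - sphereGrad y‖ ^ 2 =
        θ * ‖planeGrad z - planeGrad w‖ ^ 2 + (1 - θ) * ‖planeGrad z - planeGrad (conj w)‖ ^ 2 := by
  set p := √(x 1 ^ 2 + x 2 ^ 2)
  set q := √(y 1 ^ 2 + y 2 ^ 2)
  have hp : p ^ 2 = x 1 ^ 2 + x 2 ^ 2 := Real.sq_sqrt (by positivity)
  have hq : q ^ 2 = y 1 ^ 2 + y 2 ^ 2 := Real.sq_sqrt (by positivity)
  have hcs : |x 1 * y 1 + x 2 * y 2| ≤ p * q := by
    rw [← Real.sqrt_mul (by positivity)]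
    exact Real.abs_le_sqrt (by nlinarith [sq_nonneg (x 1 * y 2 - x 2 * y 1)])
  obtain ⟨θ, hθ, hs⟩ := exists_mem_Icc_eq_sub_of_abs_le hcs
  set z : ℂ := ⟨x 0, p⟩
  set w : ℂ := ⟨y 0, q⟩
  have hz : ‖z‖ = 1 := by
    rw [Complex.norm_eq_sqrt_sq_add_sq, hp, ← add_assoc, sum_sq_eq_one_of_norm_eq_one hx,
      Real.sqrt_one]
  have hw : ‖w‖ = 1 := by
    rw [Complex.norm_eq_sqrt_sq_add_sq, hq, ← add_assoc, sum_sq_eq_one_of_norm_eq_one hy,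
      Real.sqrt_one]
  have hw' : ‖conj w‖ = 1 := by rwa [Complex.norm_conj]
  refine ⟨z, w, θ, hθ, hz, hw, ?_, ?_, ?_⟩
  · simp only [sq, Complex.mul_re, w]
    linear_combination -hq
  · simp only [norm_sq_eq_sum_fin_three, Complex.sq_norm_eq_re_sq_add_im_sq, PiLp.sub_apply,
      Complex.sub_re, Complex.sub_im, Complex.conj_re, Complex.conj_im, z, w]
    linear_combination (-1) * hp - hq - 2 * hs
  · simp only [sphereGrad, norm_sq_eq_sum_fin_three, PiLp.sub_apply, Matrix.cons_val_zero,
      Matrix.cons_val_one, Matrix.cons_val, Complex.sq_norm_eq_re_sq_add_im_sq, Complex.sub_re,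
      Complex.sub_im, re_planeGrad hz, re_planeGrad hw, re_planeGrad hw', im_planeGrad hz,
      im_planeGrad hw, im_planeGrad hw', Complex.conj_re, Complex.conj_im, z, w]
    linear_combination (-(1 + 2 * x 0 ^ 2) ^ 2) * hp - (1 + 2 * y 0 ^ 2) ^ 2 * hq -
      2 * (1 + 2 * x 0 ^ 2) * (1 + 2 * y 0 ^ 2) * hs

lemma norm_sphereGrad_sub_le (hx : ‖x‖ = 1) (hy : ‖y‖ = 1) :
    ‖sphereGrad x - sphereGrad y‖ ≤ 3 * ‖x - y‖ := by
  obtain ⟨z, w, θ, ⟨hθ₀, hθ₁⟩, hz, hw, -, hxy, hV⟩ := exists_planar_pair hx hy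
  have hw' : ‖conj w‖ = 1 := by rwa [Complex.norm_conj]
  have h₁ := pow_le_pow_left₀ (norm_nonneg _) (norm_planeGrad_sub_le hz hw) 2
  have h₂ := pow_le_pow_left₀ (norm_nonneg _) (norm_planeGrad_sub_le hz hw') 2
  rw [← sq_le_sq₀ (norm_nonneg _) (by positivity), mul_pow, hV, hxy]
  rw [mul_pow] at h₁ h₂
  nlinarith [mul_le_mul_of_nonneg_left h₁ hθ₀, mul_le_mul_of_nonneg_left h₂ (sub_nonneg.2 hθ₁)]

lemma le_norm_sphereGrad_sub (hx : ‖x‖ = 1) (hy : ‖y‖ = 1) :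
    (y 0 ^ 2 - (y 1 ^ 2 + y 2 ^ 2)) ^ 2 / 16 * ‖x - y‖ ≤ ‖sphereGrad x - sphereGrad y‖ := by
  obtain ⟨z, w, θ, ⟨hθ₀, hθ₁⟩, hz, hw, hre, hxy, hV⟩ := exists_planar_pair hx hy
  have hw' : ‖conj w‖ = 1 := by rwa [Complex.norm_conj]
  have hre' : ((conj w) ^ 2).re = (w ^ 2).re := by rw [← map_pow, Complex.conj_re]
  have h₁ := pow_le_pow_left₀ (by positivity) (le_norm_planeGrad_sub hz hw) 2
  have h₂ := pow_le_pow_left₀ (by positivity) (le_norm_planeGrad_sub hz hw') 2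
  rw [hre'] at h₂
  rw [← hre, ← sq_le_sq₀ (by positivity) (norm_nonneg _), mul_pow, hV, hxy]
  rw [mul_pow] at h₁ h₂
  nlinarith [mul_le_mul_of_nonneg_left h₁ hθ₀, mul_le_mul_of_nonneg_left h₂ (sub_nonneg.2 hθ₁)]

lemma half_le_abs_of_cone {δ : ℝ} (hδ : 0 ≤ δ) (hy : ‖y‖ = 1)
    (hcone : y 0 ^ 2 ≤ (1 - δ) * (y 1 ^ 2 + y 2 ^ 2)) :
    δ / 2 ≤ |y 0 ^ 2 - (y 1 ^ 2 + y 2 ^ 2)| := by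
  have hy' := sum_sq_eq_one_of_norm_eq_one hy
  have hhalf : 1 / 2 ≤ y 1 ^ 2 + y 2 ^ 2 := by
    nlinarith [mul_nonneg hδ (add_nonneg (sq_nonneg (y 1)) (sq_nonneg (y 2)))]
  rw [abs_sub_comm, abs_of_nonneg (by nlinarith)]
  nlinarith [mul_nonneg hδ (sub_nonneg.2 hhalf)]

end Sphere

/-- `∇u₀` is Lipschitz on the unit sphere, and bi-Lipschitz from base points `x₀` that are
quantitatively away from the cone `{x₁² = x₂² + x₃²}`. -/
theorem statement18 :
    (∃ C > (0 : ℝ), ∀ x y : EuclideanSpace ℝ (Fin 3), ‖x‖ = 1 → ‖y‖ = 1 →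
      ‖gradient u0 x - gradient u0 y‖ ≤ C * ‖x - y‖) ∧
    (∀ δ ∈ Set.Ioo (0 : ℝ) 1, ∃ c > (0 : ℝ),
      ∀ x x₀ : EuclideanSpace ℝ (Fin 3), ‖x‖ = 1 → ‖x₀‖ = 1 →
        (x₀ 0) ^ 2 ≤ (1 - δ) * ((x₀ 1) ^ 2 + (x₀ 2) ^ 2) →
        c * ‖x - x₀‖ ≤ ‖gradient u0 x - gradient u0 x₀‖) := by
  refine ⟨⟨(√2)⁻¹ * 3, by positivity, fun x y hx hy => ?_⟩, fun δ ⟨hδ, _⟩ => ?_⟩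
  · rw [norm_gradient_u0_sub hx hy, mul_assoc]
    gcongr
    exact norm_sphereGrad_sub_le hx hy
  · refine ⟨(√2)⁻¹ * ((δ / 2) ^ 2 / 16), by positivity, fun x x₀ hx hx₀ hcone => ?_⟩
    rw [norm_gradient_u0_sub hx hx₀, mul_assoc]
    gcongr
    have hμ := pow_le_pow_left₀ (by positivity) (half_le_abs_of_cone hδ.le hx₀ hcone) 2
    rw [sq_abs] at hμ
    calc (δ / 2) ^ 2 / 16 * ‖x - x₀‖
        ≤ (x₀ 0 ^ 2 - (x₀ 1 ^ 2 + x₀ 2 ^ 2)) ^ 2 / 16 * ‖x - x₀‖ := by gcongr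
      _ ≤ ‖sphereGrad x - sphereGrad x₀‖ := le_norm_sphereGrad_sub hx hx₀

end
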